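/- Let H ⊆ binom([n],3) be a 2-resilient 3-graph with matching number s ≥ 2, let T_1,...,T_s be a matching in H with R = T_1 ∪ ⋯ ∪ T_s, and suppose P ⊆ R with |P| = 2. Then the number of vertices x ∉ R with P ∪ {x} ∈ H is at most 2s. -/
import Mathlib


/-- The matching number of a hypergraph: the largest size of a set of
pairwise disjoint edges. -/
noncomputable def matchingNumber (H : Finset (Finset ℕ)) : ℕ :=
  sSup {m | ∃ M : Finset (Finset ℕ), M ⊆ H ∧ M.card = m ∧
    (M : Set (Finset ℕ)).PairwiseDisjoint id}

/-- A hypergraph is `t`-resilient if deleting any set of at most `t`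
vertices does not decrease its matching number. -/
def Resilient (t : ℕ) (H : Finset (Finset ℕ)) : Prop :=
  ∀ T : Finset ℕ, T.card ≤ t →
    matchingNumber (H.filter fun F => Disjoint F T) = matchingNumber H

/-- `S 0, …, S (r-1)` form a pseudo sunflower with center `C`:
the `S i` are distinct, `C` is a proper subset of one of them, and the
sets `S i \ C` are pairwise disjoint. -/
def IsPseudoSunflower {r : ℕ} (S : Fin r → Finset ℕ) (C : Finset ℕ) : Prop :=
  Function.Injective S ∧ (∃ i, C ⊂ S i) ∧
    ∀ i j, i ≠ j → Disjoint (S i \ C) (S j \ C)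

/-- The covering (transversal) number of a hypergraph. -/
noncomputable def coverNumber (H : Finset (Finset ℕ)) : ℕ :=
  sInf {m | ∃ Y : Finset ℕ, Y.card = m ∧ ∀ F ∈ H, (F ∩ Y).Nonempty}

lemma matching_le_aux (H : Finset (Finset ℕ)) (M : Finset (Finset ℕ)) (hM : M ⊆ H)
    (hd : (M : Set (Finset ℕ)).PairwiseDisjoint id) :
    M.card ≤ matchingNumber H := by
  apply le_csSup
  · refine ⟨H.card, ?_⟩
    rintro m ⟨M', hM', hc, _⟩
    exact hc ▸ Finset.card_le_card hM'
  · exact ⟨M, hM, rfl, hd⟩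

lemma exists_matching_aux (H : Finset (Finset ℕ)) :
    ∃ M : Finset (Finset ℕ), M ⊆ H ∧ M.card = matchingNumber H ∧
      (M : Set (Finset ℕ)).PairwiseDisjoint id := by
  have hne : ({m | ∃ M : Finset (Finset ℕ), M ⊆ H ∧ M.card = m ∧
      (M : Set (Finset ℕ)).PairwiseDisjoint id} : Set ℕ).Nonempty :=
    ⟨0, ∅, by simp, by simp, by simp⟩
  have hbdd : BddAbove {m | ∃ M : Finset (Finset ℕ), M ⊆ H ∧ M.card = m ∧
      (M : Set (Finset ℕ)).PairwiseDisjoint id} := by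
    refine ⟨H.card, ?_⟩
    rintro m ⟨M', hM', hc, _⟩
    exact hc ▸ Finset.card_le_card hM'
  obtain ⟨M, h1, h2, h3⟩ := Nat.sSup_mem hne hbdd
  exact ⟨M, h1, h2, h3⟩


/-- Let `H` be a 2-resilient 3-graph with matching number `s ≥ 2`,
`T₁,…,T_s` a matching with union `R`, and `P ⊆ R` a pair. Then at most `2s`
vertices `x ∉ R` satisfy `P ∪ {x} ∈ H`. -/
theorem stmt7 (n s : ℕ) (hs : 2 ≤ s) (H : Finset (Finset ℕ))
    (hH : H ⊆ (Finset.range n).powersetCard 3)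
    (hres : Resilient 2 H) (hν : matchingNumber H = s)
    (T : Fin s → Finset ℕ) (hT : ∀ i, T i ∈ H)
    (hTd : ∀ i j, i ≠ j → Disjoint (T i) (T j))
    (R : Finset ℕ) (hR : R = Finset.univ.biUnion T)
    (P : Finset ℕ) (hP : P ⊆ R) (hP2 : P.card = 2) :
    ((Finset.range n).filter fun x => x ∉ R ∧ P ∪ {x} ∈ H).card ≤ 2 * s := by
  by_contra hcon
  push_neg at hcon
  set X := (Finset.range n).filter fun x => x ∉ R ∧ P ∪ {x} ∈ H with hXdef
  have hXcard : 2 * s + 1 ≤ X.card := hcon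
  have hcard3 : ∀ e ∈ H, e.card = 3 := fun e he => (Finset.mem_powersetCard.mp (hH he)).2
  -- resilience at P gives a matching of size s avoiding P
  have hmp := hres P (le_of_eq hP2)
  rw [hν] at hmp
  obtain ⟨M, hMsub, hMcard, hMd⟩ := exists_matching_aux (H.filter fun F => Disjoint F P)
  rw [hmp] at hMcard
  have hMH : M ⊆ H := hMsub.trans (Finset.filter_subset _ _)
  have hMdisjP : ∀ e ∈ M, Disjoint e P := fun e he => (Finset.mem_filter.mp (hMsub he)).2
  set V := M.biUnion id with hVdef
  have hVcard : V.card = 3 * s := by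
    rw [hVdef, Finset.card_biUnion (fun e he f hf hef => hMd he hf hef)]
    rw [Finset.sum_congr rfl (fun e he => show (id e).card = 3 from hcard3 e (hMH he))]
    simp [hMcard, mul_comm]
  have hPne : P.Nonempty := Finset.card_pos.mp (by omega)
  -- every x ∈ X lies in V
  have hXV : ∀ x ∈ X, x ∈ V := by
    intro x hx
    by_contra hxV
    have hx' := Finset.mem_filter.mp hx
    have hxR := hx'.2.1
    have hxH := hx'.2.2
    have hnotmem : P ∪ {x} ∉ M := by
      intro hmem
      obtain ⟨p, hp⟩ := hPne
      exact Finset.disjoint_left.mp (hMdisjP _ hmem) (Finset.mem_union_left _ hp) hp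
    have hdisj : ∀ e ∈ M, Disjoint (P ∪ {x}) e := by
      intro e he
      rw [Finset.disjoint_union_left]
      refine ⟨(hMdisjP e he).symm, ?_⟩
      rw [Finset.disjoint_singleton_left]
      intro hxe
      exact hxV (Finset.mem_biUnion.mpr ⟨e, he, hxe⟩)
    have hle : (insert (P ∪ {x}) M).card ≤ matchingNumber H := by
      apply matching_le_aux
      · intro e he
        rcases Finset.mem_insert.mp he with h | h
        · exact h ▸ hxH
        · exact hMH h
      · rw [Finset.coe_insert]
        exact hMd.insert (fun e he hne => hdisj e he)
    rw [Finset.card_insert_of_notMem hnotmem, hMcard, hν] at hle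
    omega
  -- every T j contributes a vertex of T j \ P in V
  have hTV : ∀ j : Fin s, ∃ v, v ∈ T j \ P ∧ v ∈ V := by
    intro j
    by_contra hcon2
    push_neg at hcon2
    by_cases hjm : T j ∈ M
    · have hne : (T j \ P).Nonempty := by
        rw [← Finset.card_pos]
        have := Finset.le_card_sdiff P (T j)
        rw [hcard3 _ (hT j), hP2] at this
        omega
      obtain ⟨v, hv⟩ := hne
      exact hcon2 v hv (Finset.mem_biUnion.mpr ⟨T j, hjm, (Finset.mem_sdiff.mp hv).1⟩)
    · have hdisj : ∀ e ∈ M, Disjoint (T j) e := by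
        intro e he
        rw [Finset.disjoint_left]
        intro v hvT hve
        have hvV : v ∈ V := Finset.mem_biUnion.mpr ⟨e, he, hve⟩
        by_cases hvP : v ∈ P
        · exact (Finset.disjoint_left.mp (hMdisjP e he)) hve hvP
        · exact hcon2 v (Finset.mem_sdiff.mpr ⟨hvT, hvP⟩) hvV
      have hle : (insert (T j) M).card ≤ matchingNumber H := by
        apply matching_le_aux
        · intro e he
          rcases Finset.mem_insert.mp he with h | h
          · exact h ▸ hT j
          · exact hMH h
        · rw [Finset.coe_insert]
          exact hMd.insert (fun e he hne => hdisj e he)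
      rw [Finset.card_insert_of_notMem hjm, hMcard, hν] at hle
      omega
  choose v hv1 hv2 using hTV
  have hvT : ∀ j, v j ∈ T j := fun j => (Finset.mem_sdiff.mp (hv1 j)).1
  have hvR : ∀ j, v j ∈ R := fun j => hR ▸ Finset.mem_biUnion.mpr ⟨j, Finset.mem_univ _, hvT j⟩
  have hvinj : Function.Injective v := by
    intro i j hij
    by_contra hne
    exact (Finset.disjoint_left.mp (hTd i j hne)) (hvT i) (hij ▸ hvT j)
  set W := Finset.image v Finset.univ with hWdef
  have hWcard : W.card = s := by
    rw [hWdef, Finset.card_image_of_injective _ hvinj, Finset.card_univ, Fintype.card_fin]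
  have hdisjXW : Disjoint X W := by
    rw [Finset.disjoint_left]
    intro x hx hxW
    obtain ⟨j, _, hj⟩ := Finset.mem_image.mp hxW
    exact (Finset.mem_filter.mp hx).2.1 (hj ▸ hvR j)
  have hsub : X ∪ W ⊆ V := by
    intro x hx
    rcases Finset.mem_union.mp hx with h | h
    · exact hXV x h
    · obtain ⟨j, _, hj⟩ := Finset.mem_image.mp h
      exact hj ▸ hv2 j
  have := Finset.card_le_card hsub
  rw [Finset.card_union_of_disjoint hdisjXW, hVcard, hWcard] at this
  omega
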